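/- arXiv:2003.01651 — 2 statements merged into one kernel-verified Lean document; each statement's English description precedes it below -/
import Mathlib

section
/- Let f : 𝔻 → ℂ be analytic with |f(z)| ≤ 1 for all z ∈ 𝔻, and let z₁, …, z_N ∈ 𝔻 be distinct with w_i = f(z_i). Then the Pick matrix P with entries P_{ik} = (1 - w_i \overline{w_k})/(1 - z_i \overline{z_k}) is positive semidefinite. -/
/-!
With the Szegő kernels `k_a ξ = (1 - conj a * ξ)⁻¹`, Cauchy's formula on the unit circle reads
`⟨u, k_a⟩ = u a` for `u` holomorphic on the open disc and continuous on its closure, where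
`⟨u, v⟩` is the circle average of `u * conj v`. If such an `F` has `‖F‖ ≤ 1` on the circle and
`P` is its Pick matrix at points `a_k` of the disc, put `g = ∑ x_k k_{a_k}` and
`h = ∑ x_k conj (F a_k) k_{a_k}`; then `x* P x = ‖g‖² - ‖h‖²` and `⟨F h, g⟩ = ‖h‖²`, so
`‖h‖² ≤ ‖F h‖ ‖g‖ ≤ ‖h‖ ‖g‖` gives `x* P x ≥ 0`. For a general `f` on the open disc, apply this to
the dilations `f (r ·)` at the points `r z_i` and let `r → 1⁻`: the Pick matrices converge, and
positive semidefinite matrices form a closed set.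
-/

open Complex Set Metric Filter Topology Real ComplexConjugate Matrix
open scoped ComplexOrder

namespace Matrix

variable {n R : Type*} [Fintype n] [Ring R] [PartialOrder R] [StarRing R] [TopologicalSpace R]
  [IsTopologicalRing R] [ContinuousStar R] [ClosedIciTopology R] [T2Space R]

theorem isClosed_setOf_posSemidef : IsClosed {A : Matrix n n R | A.PosSemidef} := by
  simp only [posSemidef_iff_dotProduct_mulVec, ofPred_and, ofPred_forall]
  refine (isClosed_eq continuous_id.matrix_conjTranspose continuous_id).inter
    (isClosed_iInter fun x => isClosed_Ici.preimage ?_)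
  exact continuous_const.dotProduct (continuous_id.matrix_mulVec continuous_const)

end Matrix

theorem circleAverage_ofReal (φ : ℂ → ℝ) (c : ℂ) (R : ℝ) :
    circleAverage (fun ξ => (φ ξ : ℂ)) c R = circleAverage φ c R := by
  simp only [circleAverage_def, intervalIntegral.integral_ofReal, real_smul, smul_eq_mul,
    ofReal_mul]

theorem circleAverage_mul_conj_self (u : ℂ → ℂ) (c : ℂ) (R : ℝ) :
    circleAverage (fun ξ => u ξ * conj (u ξ)) c R = circleAverage (fun ξ => ‖u ξ‖ ^ 2) c R := by
  simp only [mul_conj', ← ofReal_pow, circleAverage_ofReal]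

theorem circleAverage_norm_sq_le_of_circleAverage_mul_conj_eq {F g h : ℂ → ℂ} {c : ℂ} {R : ℝ}
    (hF : ContinuousOn F (sphere c |R|)) (hF1 : ∀ ξ ∈ sphere c |R|, ‖F ξ‖ ≤ 1)
    (hg : ContinuousOn g (sphere c |R|)) (hh : ContinuousOn h (sphere c |R|))
    (hFhg : circleAverage (fun ξ => F ξ * h ξ * conj (g ξ)) c R
      = circleAverage (fun ξ => h ξ * conj (h ξ)) c R) :
    circleAverage (fun ξ => ‖h ξ‖ ^ 2) c R ≤ circleAverage (fun ξ => ‖g ξ‖ ^ 2) c R := by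
  have hh_sq : CircleIntegrable (fun ξ => ‖h ξ‖ ^ 2) c R := (hh.norm.pow 2).circleIntegrable'
  have hg_sq : CircleIntegrable (fun ξ => ‖g ξ‖ ^ 2) c R := (hg.norm.pow 2).circleIntegrable'
  have hre : circleAverage (fun ξ => ‖h ξ‖ ^ 2) c R
      = circleAverage (fun ξ => (F ξ * h ξ * conj (g ξ)).re) c R := calc
    _ = (circleAverage (fun ξ => h ξ * conj (h ξ)) c R).re := by
      rw [circleAverage_mul_conj_self, ofReal_re]
    _ = _ := by
      rw [← hFhg]
      exact (reCLM.circleAverage_comp_comm ((hF.mul hh).mul hg.star).circleIntegrable').symm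
  have hpointwise : ∀ ξ ∈ sphere c |R|,
      (F ξ * h ξ * conj (g ξ)).re ≤ (2⁻¹ : ℝ) • (‖h ξ‖ ^ 2 + ‖g ξ‖ ^ 2) := by
    intro ξ hξ
    have hre_le := re_le_norm (F ξ * h ξ * conj (g ξ))
    rw [norm_mul, norm_mul, RCLike.norm_conj] at hre_le
    have := hF1 ξ hξ
    rw [smul_eq_mul]
    nlinarith [sq_nonneg (‖h ξ‖ - ‖g ξ‖), mul_nonneg (norm_nonneg (h ξ)) (norm_nonneg (g ξ))]
  have hle := circleAverage_mono (f₁ := fun ξ => (F ξ * h ξ * conj (g ξ)).re)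
    (continuous_re.comp_continuousOn ((hF.mul hh).mul hg.star)).circleIntegrable'
    ((hh_sq.add hg_sq).const_smul (a := (2⁻¹ : ℝ))) hpointwise
  rw [← hre, circleAverage_smul, circleAverage_add hh_sq hg_sq, smul_eq_mul] at hle
  linarith

theorem one_sub_conj_mul_ne_zero {a ξ : ℂ} (ha : ‖a‖ < 1) (hξ : ‖ξ‖ ≤ 1) :
    1 - conj a * ξ ≠ 0 := by
  refine sub_ne_zero.2 fun h => ?_
  have : ‖conj a * ξ‖ < 1 := by
    rw [norm_mul, RCLike.norm_conj]
    nlinarith [norm_nonneg a, norm_nonneg ξ]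
  simp [← h] at this

noncomputable def szegoKernel (a ξ : ℂ) : ℂ := (1 - conj a * ξ)⁻¹

theorem differentiableOn_szegoKernel {a : ℂ} (ha : ‖a‖ < 1) :
    DifferentiableOn ℂ (szegoKernel a) (closedBall 0 1) := by
  refine ((differentiableOn_const 1).sub ((differentiableOn_const _).mul differentiableOn_id)).inv
    fun ξ hξ => one_sub_conj_mul_ne_zero ha ?_
  simpa using hξ

theorem conj_szegoKernel_of_mem_sphere (a : ℂ) {ξ : ℂ} (hξ : ξ ∈ sphere (0 : ℂ) 1) :
    conj (szegoKernel a ξ) = ξ / (ξ - a) := by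
  have hξ0 : ξ ≠ 0 := ne_zero_of_mem_unit_sphere ⟨ξ, hξ⟩
  have hconj : conj ξ = ξ⁻¹ := by
    have : normSq ξ = 1 := by rw [normSq_eq_norm_sq, mem_sphere_zero_iff_norm.1 hξ, one_pow]
    simp [inv_def, this]
  rw [szegoKernel, map_inv₀, map_sub, map_one, map_mul, conj_conj, hconj]
  field_simp

theorem circleAverage_mul_conj_szegoKernel {u : ℂ → ℂ} (hu : DiffContOnCl ℂ u (ball 0 1))
    {a : ℂ} (ha : ‖a‖ < 1) :
    circleAverage (fun ξ => u ξ * conj (szegoKernel a ξ)) 0 1 = u a := by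
  rw [← abs_one (α := ℝ)] at hu
  rw [← hu.circleAverage_smul_div (by simpa using ha)]
  refine circleAverage_congr_sphere fun ξ hξ => ?_
  rw [abs_one] at hξ
  simp only [conj_szegoKernel_of_mem_sphere a hξ, sub_zero, smul_eq_mul, mul_comm]

noncomputable def pickMatrix {ι : Type*} (F : ℂ → ℂ) (a : ι → ℂ) : Matrix ι ι ℂ :=
  Matrix.of fun i k => (1 - F (a i) * conj (F (a k))) / (1 - a i * conj (a k))

theorem isHermitian_pickMatrix {ι : Type*} (F : ℂ → ℂ) (a : ι → ℂ) :
    (pickMatrix F a).IsHermitian := by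
  ext i k
  simp only [pickMatrix, conjTranspose_apply, of_apply, star_div₀, star_sub, star_one, star_mul',
    RCLike.star_def, conj_conj]
  ring

section Pick

variable {ι : Type*} [Fintype ι]

noncomputable def szegoSum (a e : ι → ℂ) (ξ : ℂ) : ℂ := ∑ k, e k * szegoKernel (a k) ξ

theorem differentiableOn_szegoSum {a : ι → ℂ} (ha : ∀ k, ‖a k‖ < 1) (e : ι → ℂ) :
    DifferentiableOn ℂ (szegoSum a e) (closedBall 0 1) :=
  DifferentiableOn.fun_sum fun k _ => (differentiableOn_szegoKernel (ha k)).const_mul (e k)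

theorem circleAverage_mul_conj_szegoSum {u : ℂ → ℂ} (hu : DiffContOnCl ℂ u (ball 0 1))
    {a : ι → ℂ} (ha : ∀ k, ‖a k‖ < 1) (e : ι → ℂ) :
    circleAverage (fun ξ => u ξ * conj (szegoSum a e ξ)) 0 1 = ∑ k, conj (e k) * u (a k) := by
  have hu_sphere : ContinuousOn u (sphere 0 1) :=
    hu.continuousOn_ball.mono sphere_subset_closedBall
  simp only [szegoSum, map_sum, map_mul, Finset.mul_sum, mul_left_comm (u _)]
  rw [circleAverage_fun_sum fun k _ => ?_]
  · refine Finset.sum_congr rfl fun k _ => ?_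
    simp only [← smul_eq_mul (conj (e k))]
    rw [circleAverage_fun_smul, circleAverage_mul_conj_szegoKernel hu (ha k)]
  · have hk := (differentiableOn_szegoKernel (ha k)).continuousOn.mono sphere_subset_closedBall
    exact ContinuousOn.circleIntegrable zero_le_one
      (continuousOn_const.mul (hu_sphere.mul hk.star))

theorem dotProduct_mulVec_pickMatrix (F : ℂ → ℂ) (a x : ι → ℂ) :
    star x ⬝ᵥ (pickMatrix F a *ᵥ x)
      = ∑ i, conj (x i) * szegoSum a x (a i)
        - ∑ i, conj (x i) * F (a i) * szegoSum a (fun k => x k * conj (F (a k))) (a i) := by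
  simp only [dotProduct, mulVec, pickMatrix, szegoSum, szegoKernel, of_apply, Pi.star_apply,
    RCLike.star_def, Finset.mul_sum, ← Finset.sum_sub_distrib]
  refine Finset.sum_congr rfl fun i _ => Finset.sum_congr rfl fun k _ => ?_
  rw [div_eq_mul_inv, mul_comm (conj (a k)) (a i)]
  ring

theorem posSemidef_pickMatrix {F : ℂ → ℂ} (hF : DiffContOnCl ℂ F (ball 0 1))
    (hF1 : ∀ ξ ∈ sphere (0 : ℂ) 1, ‖F ξ‖ ≤ 1) {a : ι → ℂ} (ha : ∀ i, ‖a i‖ < 1) :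
    (pickMatrix F a).PosSemidef := by
  refine .of_dotProduct_mulVec_nonneg (isHermitian_pickMatrix F a) fun x => ?_
  set g := szegoSum a x
  set h := szegoSum a fun k => x k * conj (F (a k))
  have hg : DiffContOnCl ℂ g (ball 0 1) :=
    (differentiableOn_szegoSum ha x).diffContOnCl_ball le_rfl
  have hh : DiffContOnCl ℂ h (ball 0 1) :=
    (differentiableOn_szegoSum ha _).diffContOnCl_ball le_rfl
  have hgg : circleAverage (fun ξ => g ξ * conj (g ξ)) 0 1 = ∑ i, conj (x i) * g (a i) :=
    circleAverage_mul_conj_szegoSum hg ha x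
  have hhh : circleAverage (fun ξ => h ξ * conj (h ξ)) 0 1
      = ∑ i, conj (x i) * F (a i) * h (a i) := by
    rw [circleAverage_mul_conj_szegoSum hh ha]
    simp only [map_mul, conj_conj]
  have hFhg : circleAverage (fun ξ => F ξ * h ξ * conj (g ξ)) 0 1
      = ∑ i, conj (x i) * F (a i) * h (a i) := by
    rw [circleAverage_mul_conj_szegoSum (u := fun ξ => F ξ * h ξ) (hF.smul hh) ha]
    simp only [mul_assoc]
  have hsphere : ∀ {u : ℂ → ℂ}, DiffContOnCl ℂ u (ball 0 1) →
      ContinuousOn u (sphere 0 |1|) := fun hu => by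
    rw [abs_one]
    exact hu.continuousOn_ball.mono sphere_subset_closedBall
  have hle := circleAverage_norm_sq_le_of_circleAverage_mul_conj_eq (hsphere hF)
    (by simpa using hF1) (hsphere hg) (hsphere hh) (hFhg.trans hhh.symm)
  rw [dotProduct_mulVec_pickMatrix, ← hgg, ← hhh, circleAverage_mul_conj_self,
    circleAverage_mul_conj_self, ← ofReal_sub, zero_le_real]
  linarith

theorem norm_ofReal_mul_lt_one {r : ℝ} (hr₀ : 0 ≤ r) (hr₁ : r < 1) {ξ : ℂ} (hξ : ‖ξ‖ ≤ 1) :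
    ‖(r : ℂ) * ξ‖ < 1 := by
  rw [norm_mul, norm_real, Real.norm_of_nonneg hr₀]
  nlinarith [norm_nonneg ξ]

theorem posSemidef_pickMatrix_dilation {f : ℂ → ℂ} (hf : DifferentiableOn ℂ f {z : ℂ | ‖z‖ < 1})
    (hfb : ∀ z ∈ {z : ℂ | ‖z‖ < 1}, ‖f z‖ ≤ 1) {z : ι → ℂ} (hz : ∀ i, ‖z i‖ < 1) {r : ℝ}
    (hr₀ : 0 ≤ r) (hr₁ : r < 1) :
    (pickMatrix (fun ξ => f (r * ξ)) fun i => r * z i).PosSemidef := by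
  have hmaps : MapsTo (fun ξ : ℂ => (r : ℂ) * ξ) (closedBall 0 1) {z : ℂ | ‖z‖ < 1} :=
    fun ξ hξ => norm_ofReal_mul_lt_one hr₀ hr₁ (mem_closedBall_zero_iff.1 hξ)
  refine posSemidef_pickMatrix ?_ (fun ξ hξ => hfb _ (hmaps (sphere_subset_closedBall hξ)))
    fun i => norm_ofReal_mul_lt_one hr₀ hr₁ (hz i).le
  exact (hf.comp (differentiableOn_const _ |>.mul differentiableOn_id) hmaps).diffContOnCl_ball
    subset_rfl

end Pick

theorem tendsto_pickMatrix_dilation {ι : Type*} {f : ℂ → ℂ} {z : ι → ℂ}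
    (hf : ∀ i, ContinuousAt f (z i)) (hz : ∀ i k, 1 - z i * conj (z k) ≠ 0) :
    Tendsto (fun r : ℝ => pickMatrix (fun ξ => f (r * ξ)) fun i => r * z i) (𝓝 1)
      (𝓝 (pickMatrix f z)) := by
  have hzr : ∀ i, Tendsto (fun r : ℝ => (r : ℂ) * z i) (𝓝 1) (𝓝 (z i)) := fun i => by
    simpa using (by fun_prop : Continuous fun r : ℝ => (r : ℂ) * z i).tendsto 1
  have hfr : ∀ i, Tendsto (fun r : ℝ => f (r * (r * z i))) (𝓝 1) (𝓝 (f (z i))) := fun i =>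
    (hf i).tendsto.comp <| by
      simpa using (by fun_prop : Continuous fun r : ℝ => (r : ℂ) * (r * z i)).tendsto 1
  refine tendsto_pi_nhds.2 fun i => tendsto_pi_nhds.2 fun k => ?_
  exact (tendsto_const_nhds.sub ((hfr i).mul ((continuous_conj.tendsto _).comp (hfr k)))).div
    (tendsto_const_nhds.sub ((hzr i).mul ((continuous_conj.tendsto _).comp (hzr k)))) (hz i k)

theorem stmt_3_general (N : ℕ) (f : ℂ → ℂ)
    (hf : DifferentiableOn ℂ f {z : ℂ | ‖z‖ < 1})
    (hfb : ∀ z ∈ {z : ℂ | ‖z‖ < 1}, ‖f z‖ ≤ 1)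
    (z : Fin N → ℂ) (hz : ∀ i, ‖z i‖ < 1)
    (w : Fin N → ℂ) (hw : ∀ i, w i = f (z i)) :
    Matrix.PosSemidef (Matrix.of fun i k : Fin N =>
      (1 - w i * (starRingEnd ℂ) (w k)) / (1 - z i * (starRingEnd ℂ) (z k))) := by
  obtain rfl : w = fun i => f (z i) := funext hw
  have hdisc : IsOpen {z : ℂ | ‖z‖ < 1} := isOpen_lt continuous_norm continuous_const
  have hf_cont : ∀ i, ContinuousAt f (z i) := fun i =>
    (hf.differentiableAt (hdisc.mem_nhds (hz i))).continuousAt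
  have hden : ∀ i k, 1 - z i * conj (z k) ≠ 0 := fun i k => by
    simpa only [mul_comm] using one_sub_conj_mul_ne_zero (hz k) (hz i).le
  change pickMatrix f z ∈ {A | A.PosSemidef}
  refine isClosed_setOf_posSemidef.mem_of_tendsto
    ((tendsto_pickMatrix_dilation hf_cont hden).mono_left (nhdsWithin_le_nhds (s := Iio 1))) ?_
  filter_upwards [Ioo_mem_nhdsLT one_pos] with r hr
  exact posSemidef_pickMatrix_dilation hf hfb hz hr.1.le hr.2

/-- Pick's theorem: if `f : 𝔻 → ℂ` is analytic with `|f| ≤ 1` on 𝔻 and `w i = f (z i)` at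
distinct points `z i ∈ 𝔻`, then the Pick matrix `(1 - w i * conj (w k)) / (1 - z i * conj (z k))`
is positive semidefinite. -/
theorem stmt_3 (N : ℕ) (f : ℂ → ℂ)
    (hf : DifferentiableOn ℂ f {z : ℂ | ‖z‖ < 1})
    (hfb : ∀ z ∈ {z : ℂ | ‖z‖ < 1}, ‖f z‖ ≤ 1)
    (z : Fin N → ℂ) (hz : ∀ i, ‖z i‖ < 1) (hzdist : Function.Injective z)
    (w : Fin N → ℂ) (hw : ∀ i, w i = f (z i)) :
    Matrix.PosSemidef (Matrix.of fun i k : Fin N =>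
      (1 - w i * (starRingEnd ℂ) (w k)) / (1 - z i * (starRingEnd ℂ) (z k))) :=
  stmt_3_general N f hf hfb z hz w hw
end

section
/- Let T(s) = (s+1) + 2(s-1)e^{-2s}. Every zero s of T with Re s ≥ 0 and sufficiently large |Im s| satisfies |Re s − ln√2| < ε; more precisely, for each ε > 0 there is M > 0 such that any zero s of T with |Im s| ≥ M satisfies |s − (ln√2 + i(k + 1/2)π)| < ε for some integer k. -/
open Complex Set
open scoped Real

/-!
A zero of `T` satisfies `e^{2s} = -2 u` with `u = (s-1)/(s+1)`, and `-2 = e^{ln 2 + iπ}`, so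
`2s = ln 2 + (2k+1)πi + log u` for some integer `k`. As `|Im s| → ∞`, `u → 1`, hence `log u → 0`
by continuity of `log` at `1`.
-/

lemma norm_sub_one_div_add_one_sub_one_le {s : ℂ} (hs : s.im ≠ 0) :
    ‖(s - 1) / (s + 1) - 1‖ ≤ 2 / |s.im| := by
  have him : |s.im| ≤ ‖s + 1‖ := by simpa using abs_im_le_norm (s + 1)
  have hne : s + 1 ≠ 0 := fun h => hs (by simpa using congrArg im h)
  have hsub : (s - 1) / (s + 1) - 1 = -2 / (s + 1) := by field_simp; ring
  rw [hsub, norm_div, norm_neg, Complex.norm_two]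
  exact div_le_div_of_nonneg_left zero_le_two (abs_pos.mpr hs) him

lemma exists_int_sub_eq_log_div_two_of_zero {s : ℂ} (hne : s + 1 ≠ 0)
    (hs : (s + 1) + 2 * (s - 1) * exp (-2 * s) = 0) :
    ∃ k : ℤ, s - ((Real.log (Real.sqrt 2) : ℂ) + ((k : ℂ) + 1 / 2) * π * I) =
      log ((s - 1) / (s + 1)) / 2 := by
  set u := (s - 1) / (s + 1)
  have hexp : exp (2 * s) = -2 * u := by
    have hinv : exp (-2 * s) * exp (2 * s) = 1 := by rw [← exp_add]; simp
    rw [mul_div_assoc', eq_div_iff hne]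
    linear_combination exp (2 * s) * hs - 2 * (s - 1) * hinv
  have hu : u ≠ 0 := fun h => exp_ne_zero (2 * s) (by rw [hexp, h, mul_zero])
  have hexp_log : exp (2 * s) = exp (Real.log 2 + π * I + log u) := by
    rw [exp_add, exp_add, exp_pi_mul_I, exp_log hu, ← ofReal_exp, Real.exp_log two_pos, hexp]
    push_cast
    ring
  obtain ⟨n, hn⟩ := exp_eq_exp_iff_exists_int.mp hexp_log
  refine ⟨n, ?_⟩
  rw [Real.log_sqrt zero_le_two]
  push_cast
  linear_combination hn / 2

/-- Asymptotic zero chains of `T(s) = (s+1) + 2(s-1)e^{-2s}`: for every `ε > 0` there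
is `M > 0` such that every zero `s` of `T` with `Re s ≥ 0` and `|Im s| ≥ M` lies within
`ε` of `ln √2 + i (k + 1/2) π` for some integer `k`. -/
theorem stmt_11 :
    ∀ ε : ℝ, 0 < ε → ∃ M : ℝ, 0 < M ∧ ∀ s : ℂ,
      (s + 1) + 2 * (s - 1) * Complex.exp (-2 * s) = 0 →
      0 ≤ s.re → M ≤ |s.im| →
      ∃ k : ℤ, ‖s - ((Real.log (Real.sqrt 2) : ℂ) + ((k : ℂ) + 1 / 2) * π * Complex.I)‖ < ε := by
  intro ε hε
  obtain ⟨δ, hδ, hlog⟩ := Metric.continuousAt_iff.mp (continuousAt_clog one_mem_slitPlane)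
    (2 * ε) (by positivity)
  refine ⟨4 / δ, by positivity, fun s hs _ hM => ?_⟩
  have him : 0 < |s.im| := lt_of_lt_of_le (by positivity) hM
  have hne : s + 1 ≠ 0 := fun h => by simp [show s = -1 by linear_combination h] at him
  have hclose : dist ((s - 1) / (s + 1)) 1 < δ := calc
    dist ((s - 1) / (s + 1)) 1 ≤ 2 / |s.im| := by
      rw [dist_eq_norm]; exact norm_sub_one_div_add_one_sub_one_le (abs_pos.mp him)
    _ ≤ 2 / (4 / δ) := div_le_div_of_nonneg_left zero_le_two (by positivity) hM
    _ < δ := by field_simp; linarith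
  obtain ⟨k, hk⟩ := exists_int_sub_eq_log_div_two_of_zero hne hs
  refine ⟨k, ?_⟩
  have hlog_small := hlog hclose
  rw [log_one, dist_zero_right] at hlog_small
  rw [hk, norm_div, Complex.norm_two]
  linarith
end
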